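/- arXiv:1101.3455 — 4 statements merged into one kernel-verified Lean document; each statement's English description precedes it below -/
import Mathlib

section
/- The number of subspaces of type (m,k) in F_q^{n+l} with respect to a fixed l-dimensional subspace e (i.e., m-dimensional subspaces p with dim(p ∩ e) = k) equals q^{(m-k)(l-k)} · C_q(n, m-k) · C_q(l, k), where C_q denotes the Gaussian binomial coefficient. -/
set_option linter.unusedVariables false
set_option linter.unusedSectionVars false
set_option linter.unusedTactic false
set_option maxHeartbeats 1000000

noncomputable def gbinom (q : ℝ) (a k : ℤ) : ℝ :=
  if k < 0 then 0
  else ∏ i ∈ Finset.range k.toNat, (q ^ (a - k + i + 1) - 1) / (q ^ ((i : ℤ) + 1) - 1)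

open Module Submodule LinearMap


lemma prod_pow_sub_pow {q : ℝ} (hq : 1 < q) (c j : ℕ) :
    ∏ i ∈ Finset.range j, (q ^ (c + j) - q ^ i) =
      (∏ i ∈ Finset.range j, q ^ i) * ∏ i ∈ Finset.range j, (q ^ (c + i + 1) - 1) := by
  have key : ∀ i ∈ Finset.range j, q ^ (c + j) - q ^ i = q ^ i * (q ^ (c + (j - 1 - i) + 1) - 1) := by
    intro i hi
    rw [Finset.mem_range] at hi
    have h1 : c + (j - 1 - i) + 1 + i = c + j := by omega
    rw [mul_sub, mul_one, ← pow_add]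
    congr 2
    omega
  rw [Finset.prod_congr rfl key, Finset.prod_mul_distrib]
  congr 1
  exact Finset.prod_range_reflect (fun i => q ^ (c + i + 1) - 1) j

lemma gbinom_eq {q : ℝ} (hq : 1 < q) (t j : ℕ) :
    gbinom q ((j + t : ℕ) : ℤ) (j : ℕ) =
      (∏ i ∈ Finset.range j, (q ^ (j + t) - q ^ i)) /
        (∏ i ∈ Finset.range j, (q ^ j - q ^ i)) := by
  have hq0 : 0 < q := lt_trans one_pos hq
  have h1 : ∀ i : ℕ, ((j + t : ℕ) : ℤ) - (j : ℕ) + i + 1 = ((t + i + 1 : ℕ) : ℤ) := by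
    intro i; push_cast; ring
  rw [gbinom, if_neg (by omega)]
  simp only [Int.toNat_natCast]
  have : ∀ i ∈ Finset.range j, (q ^ (((j + t : ℕ) : ℤ) - (j : ℕ) + i + 1) - 1) / (q ^ ((i : ℤ) + 1) - 1)
      = (q ^ (t + i + 1) - 1) / (q ^ (i + 1) - 1) := by
    intro i _
    rw [h1 i]
    norm_cast
  rw [Finset.prod_congr rfl this]
  have hc0 : ∏ i ∈ Finset.range j, (q ^ (t + j) - q ^ i) =
      (∏ i ∈ Finset.range j, q ^ i) * ∏ i ∈ Finset.range j, (q ^ (t + i + 1) - 1) :=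
    prod_pow_sub_pow hq t j
  have hc1 : ∏ i ∈ Finset.range j, (q ^ (0 + j) - q ^ i) =
      (∏ i ∈ Finset.range j, q ^ i) * ∏ i ∈ Finset.range j, (q ^ (0 + i + 1) - 1) :=
    prod_pow_sub_pow hq 0 j
  simp only [zero_add] at hc1
  rw [show j + t = t + j by omega, hc0, hc1,
    mul_div_mul_left _ _ (by positivity), Finset.prod_div_distrib]

lemma gbinom_zero {q : ℝ} (hq : 1 < q) {a j : ℕ} (h : a < j) : gbinom q (a : ℕ) (j : ℕ) = 0 := by
  rw [gbinom, if_neg (by omega)]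
  simp only [Int.toNat_natCast]
  apply Finset.prod_eq_zero (i := j - a - 1) (Finset.mem_range.2 (by omega))
  have : ((a : ℕ) : ℤ) - (j : ℕ) + ((j - a - 1 : ℕ) : ℤ) + 1 = 0 := by
    push_cast [Nat.cast_sub (by omega : a + 1 ≤ j)]
    omega
  rw [this, zpow_zero, sub_self, zero_div]


section
variable {F : Type*} [Field F] [Fintype F]
variable {V : Type*} [AddCommGroup V] [Module F V] [Finite V]
variable {Q : Type*} [AddCommGroup Q] [Module F Q]

/-- Decomposition of maps with linearly independent composition. -/
noncomputable def liCompEquiv (f : V →ₗ[F] Q) (j : ℕ)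
    (s : LinearMap.range f →ₗ[F] V) (hfs : ∀ y : LinearMap.range f, f (s y) = (y : Q)) :
    {w : Fin j → V // LinearIndependent F (f ∘ w)} ≃
      {u : Fin j → LinearMap.range f // LinearIndependent F u} × (Fin j → LinearMap.ker f) := by
  refine
  { toFun := fun w =>
      (⟨fun i => f.rangeRestrict (w.1 i), ?_⟩,
       fun i => ⟨w.1 i - s (f.rangeRestrict (w.1 i)), ?_⟩)
    invFun := fun ud =>
      ⟨fun i => s (ud.1.1 i) + (ud.2 i : V), ?_⟩
    left_inv := ?_
    right_inv := ?_ }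
  · have : (LinearMap.range f).subtype ∘ (fun i => f.rangeRestrict (w.1 i)) = f ∘ w.1 := by
      funext i; rfl
    exact ((LinearMap.range f).subtype.linearIndependent_iff (ker_subtype _)).1
      (by rw [this]; exact w.2)
  · simp [LinearMap.mem_ker, hfs]
  · have : f ∘ (fun i => s (ud.1.1 i) + (ud.2 i : V)) =
        (LinearMap.range f).subtype ∘ ud.1.1 := by
      funext i
      have h2 := (ud.2 i).2
      rw [LinearMap.mem_ker] at h2
      simp [hfs, h2]
    rw [this]
    exact ud.1.2.map' _ (ker_subtype _)
  · rintro ⟨w, hw⟩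
    exact Subtype.ext (funext fun i => by simp)
  · rintro ⟨u, d⟩
    rw [Prod.ext_iff]
    refine ⟨Subtype.ext (funext fun i => Subtype.ext ?_), funext fun i => Subtype.ext ?_⟩
    · show f (s (u.1 i) + (d i : V)) = (u.1 i : Q)
      have h2 := (d i).2
      rw [LinearMap.mem_ker] at h2
      simp [hfs, h2]
    · have h2 := (d i).2
      rw [LinearMap.mem_ker] at h2
      have hval : f.rangeRestrict (s (u.1 i) + (d i : V)) = u.1 i :=
        Subtype.ext (by simp [hfs, h2])
      show s (u.1 i) + (d i : V) - s (f.rangeRestrict (s (u.1 i) + (d i : V))) = (d i : V)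
      rw [hval, add_sub_cancel_left]

attribute [local instance] Fintype.ofFinite

theorem card_li_comp (f : V →ₗ[F] Q) {j : ℕ} (hj : j ≤ finrank F (LinearMap.range f)) :
    Nat.card {w : Fin j → V // LinearIndependent F (f ∘ w)} =
      Nat.card (LinearMap.ker f) ^ j *
        ∏ i : Fin j,
          (Fintype.card F ^ finrank F (LinearMap.range f) - Fintype.card F ^ (i : ℕ)) := by
  have : Finite (LinearMap.range f) :=
    Finite.of_surjective f.rangeRestrict f.surjective_rangeRestrict
  obtain ⟨s, hs⟩ := f.rangeRestrict.exists_rightInverse_of_surjective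
    (LinearMap.range_eq_top.2 f.surjective_rangeRestrict)
  have hfs : ∀ y : LinearMap.range f, f (s y) = (y : Q) := by
    intro y
    have := congrArg (fun g => g y) hs
    simpa using congrArg Subtype.val this
  rw [Nat.card_congr (liCompEquiv f j s hfs), Nat.card_prod,
    card_linearIndependent hj, Nat.card_fun]
  simp only [Nat.card_eq_fintype_card, Fintype.card_fin]
  ring
end


section
variable {F : Type*} [Field F] {V : Type*} [AddCommGroup V] [Module F V]
  [FiniteDimensional F V]

theorem mkQcomp_ker_finrank (e p : Submodule F V) :
    finrank F (LinearMap.ker (e.mkQ ∘ₗ p.subtype)) = finrank F (p ⊓ e : Submodule F V) := by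
  rw [LinearMap.ker_comp, Submodule.ker_mkQ]
  have h1 : comap p.subtype e = comap p.subtype (p ⊓ e) := by
    ext x
    simp only [mem_comap, mem_inf]
    exact ⟨fun h => ⟨x.2, h⟩, fun h => h.2⟩
  rw [h1]
  exact (Submodule.comapSubtypeEquivOfLe inf_le_left).finrank_eq

theorem mkQcomp_range_finrank (e p : Submodule F V) :
    finrank F (LinearMap.range (e.mkQ ∘ₗ p.subtype)) + finrank F (p ⊓ e : Submodule F V) =
      finrank F p := by
  rw [← mkQcomp_ker_finrank e p]
  exact LinearMap.finrank_range_add_finrank_ker _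

theorem disjoint_span_of_li {j : ℕ} (e : Submodule F V) (w : Fin j → V)
    (hwLI : LinearIndependent F (e.mkQ ∘ w)) :
    Disjoint (span F (Set.range w)) e := by
  rw [Submodule.disjoint_def]
  intro x hx hxe
  obtain ⟨c, hc⟩ := (mem_span_range_iff_exists_fun F).1 hx
  have h0 : ∑ i, c i • (e.mkQ ∘ w) i = 0 := by
    have : e.mkQ x = 0 := by
      rw [Submodule.mkQ_apply, Submodule.Quotient.mk_eq_zero]; exact hxe
    rw [← this, ← hc]
    simp [Function.comp]
  have hc0 := Fintype.linearIndependent_iff.1 hwLI c h0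
  rw [← hc]
  simp [hc0]

theorem key_rank {k j : ℕ} (e : Submodule F V) (v : Fin k → V) (w : Fin j → V)
    (hv : ∀ i, v i ∈ e) (hvLI : LinearIndependent F v)
    (hwLI : LinearIndependent F (e.mkQ ∘ w)) :
    finrank F (span F (Set.range v ∪ Set.range w)) = k + j ∧
      finrank F ((span F (Set.range v ∪ Set.range w)) ⊓ e : Submodule F V) = k := by
  have hspanv : span F (Set.range v) ≤ e := span_le.2 (Set.range_subset_iff.2 hv)
  have hdisj : Disjoint (span F (Set.range w)) e := disjoint_span_of_li e w hwLI
  have hLI : LinearIndependent F (Sum.elim v w) :=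
    hvLI.sum_type (hwLI.of_comp e.mkQ) (hdisj.symm.mono_left hspanv)
  have hp : finrank F (span F (Set.range v ∪ Set.range w)) = k + j := by
    rw [← Set.Sum.elim_range, finrank_span_eq_card hLI]
    simp
  refine ⟨hp, ?_⟩
  set p := span F (Set.range v ∪ Set.range w) with hpdef
  have hmap : Submodule.map e.mkQ p = span F (Set.range (e.mkQ ∘ w)) := by
    rw [hpdef, Submodule.map_span, Set.image_union, span_union, Set.range_comp]
    have h0 : span F (e.mkQ '' Set.range v) = ⊥ := by
      rw [Submodule.span_eq_bot]
      rintro y ⟨x, ⟨i, rfl⟩, rfl⟩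
      rw [Submodule.mkQ_apply, Submodule.Quotient.mk_eq_zero]
      exact hv i
    rw [h0, bot_sup_eq]
  have hrange : LinearMap.range (e.mkQ ∘ₗ p.subtype) = Submodule.map e.mkQ p := by
    rw [LinearMap.range_comp, Submodule.range_subtype]
  have h1 := mkQcomp_range_finrank e p
  rw [hrange, hmap, finrank_span_eq_card hwLI, Fintype.card_fin, hp] at h1
  omega
end


section
variable {F : Type*} [Field F] [Fintype F]
variable {V : Type*} [AddCommGroup V] [Module F V] [Finite V]

instance : Finite (Submodule F V) :=
  Finite.of_injective (fun p => (p : Set V)) SetLike.coe_injective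

variable (F) in
/-- adapted pairs of tuples -/
def XX (e : Submodule F V) (k j : ℕ) :=
  {vw : (Fin k → V) × (Fin j → V) //
    (∀ i, vw.1 i ∈ e) ∧ LinearIndependent F vw.1 ∧ LinearIndependent F (e.mkQ ∘ vw.2)}

instance (e : Submodule F V) (k j : ℕ) : Finite (XX F e k j) :=
  Subtype.finite

/-- global decomposition -/
def globalEquiv (e : Submodule F V) (k j : ℕ) :
    XX F e k j ≃
      {v : Fin k → e // LinearIndependent F v} ×
        {w : Fin j → V // LinearIndependent F (e.mkQ ∘ w)} where
  toFun x :=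
    (⟨fun i => ⟨x.1.1 i, x.2.1 i⟩,
      (e.subtype.linearIndependent_iff (ker_subtype e)).1 x.2.2.1⟩,
     ⟨x.1.2, x.2.2.2⟩)
  invFun ab :=
    ⟨⟨fun i => (ab.1.1 i : V), ab.2.1⟩,
      fun i => (ab.1.1 i).2,
      ab.1.2.map' e.subtype (ker_subtype e),
      ab.2.2⟩
  left_inv x := rfl
  right_inv ab := rfl
end

section
variable {F : Type*} [Field F] [Fintype F]
variable {V : Type*} [AddCommGroup V] [Module F V] [Finite V] [FiniteDimensional F V]

theorem key_rank' {k j : ℕ} (e : Submodule F V) (v : Fin k → V) (w : Fin j → V)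
    (hv : ∀ i, v i ∈ e) (hvLI : LinearIndependent F v)
    (hwLI : LinearIndependent F (e.mkQ ∘ w)) :
    finrank F (span F (Set.range v ∪ Set.range w)) = k + j ∧
      finrank F ((span F (Set.range v ∪ Set.range w)) ⊓ e : Submodule F V) = k :=
  key_rank e v w hv hvLI hwLI

/-- fiber decomposition -/
def fiberEquiv (e p : Submodule F V) {k j : ℕ}
    (hp1 : finrank F p = k + j) :
    {x : XX F e k j // span F (Set.range x.1.1 ∪ Set.range x.1.2) = p} ≃
      {v : Fin k → (p ⊓ e : Submodule F V) // LinearIndependent F v} ×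
        {w : Fin j → p // LinearIndependent F ((e.mkQ ∘ₗ p.subtype) ∘ w)} where
  toFun x :=
    (⟨fun i => ⟨x.1.1.1 i, mem_inf.2
        ⟨x.2.le (subset_span (Set.mem_union_left _ (Set.mem_range_self i))), x.1.2.1 i⟩⟩,
      ((p ⊓ e).subtype.linearIndependent_iff (ker_subtype _)).1 x.1.2.2.1⟩,
     ⟨fun i => ⟨x.1.1.2 i, x.2.le (subset_span (Set.mem_union_right _ (Set.mem_range_self i)))⟩,
      x.1.2.2.2⟩)
  invFun ab :=
    ⟨⟨⟨fun i => ((ab.1.1 i : V)), fun i => (ab.2.1 i : V)⟩,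
      fun i => (mem_inf.1 (ab.1.1 i).2).2,
      ab.1.2.map' (p ⊓ e).subtype (ker_subtype _),
      ab.2.2⟩,
      by
        apply Submodule.eq_of_le_of_finrank_le
        · rw [span_le, Set.union_subset_iff]
          constructor
          · rintro y ⟨i, rfl⟩
            exact (mem_inf.1 (ab.1.1 i).2).1
          · rintro y ⟨i, rfl⟩
            exact (ab.2.1 i).2
        · rw [hp1]
          exact (key_rank' e (fun i => ((ab.1.1 i : V))) (fun i => ((ab.2.1 i : V)))
            (fun i => (mem_inf.1 (ab.1.1 i).2).2)
            (ab.1.2.map' (p ⊓ e).subtype (ker_subtype _)) ab.2.2).1.ge⟩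
  left_inv x := rfl
  right_inv ab := rfl
end

section
variable {F : Type*} [Field F] [Fintype F]
variable {V : Type*} [AddCommGroup V] [Module F V] [Finite V] [FiniteDimensional F V]

attribute [local instance] Fintype.ofFinite

theorem main_count (e : Submodule F V) (k j : ℕ)
    (hk : k ≤ finrank F e) (hj : j ≤ finrank F (V ⧸ e)) :
    Nat.card {p : Submodule F V //
        finrank F p = k + j ∧ finrank F (p ⊓ e : Submodule F V) = k} *
      ((∏ i : Fin k, (Fintype.card F ^ k - Fintype.card F ^ (i : ℕ))) *
        ((Fintype.card F ^ k) ^ j *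
          ∏ i : Fin j, (Fintype.card F ^ j - Fintype.card F ^ (i : ℕ)))) =
    (∏ i : Fin k, (Fintype.card F ^ finrank F e - Fintype.card F ^ (i : ℕ))) *
      ((Fintype.card F ^ finrank F e) ^ j *
        ∏ i : Fin j, (Fintype.card F ^ finrank F (V ⧸ e) - Fintype.card F ^ (i : ℕ))) := by
  classical
  set q := Fintype.card F with hq
  set T := {p : Submodule F V //
      finrank F p = k + j ∧ finrank F (p ⊓ e : Submodule F V) = k} with hT
  have hXg : Nat.card (XX F e k j) =
      (∏ i : Fin k, (q ^ finrank F e - q ^ (i : ℕ))) *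
        ((q ^ finrank F e) ^ j * ∏ i : Fin j, (q ^ finrank F (V ⧸ e) - q ^ (i : ℕ))) := by
    rw [Nat.card_congr (globalEquiv e k j), Nat.card_prod, card_linearIndependent hk]
    congr 1
    have h1 : finrank F (LinearMap.range e.mkQ) = finrank F (V ⧸ e) := by
      rw [Submodule.range_mkQ, finrank_top]
    rw [card_li_comp (f := e.mkQ) (by rw [h1]; exact hj), h1]
    congr 2
    rw [Submodule.ker_mkQ, Nat.card_eq_fintype_card, card_eq_pow_finrank (K := F)]
  have hfib : ∀ p : T,
      Nat.card {x : XX F e k j // span F (Set.range x.1.1 ∪ Set.range x.1.2) = ↑p} =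
        (∏ i : Fin k, (q ^ k - q ^ (i : ℕ))) *
          ((q ^ k) ^ j * ∏ i : Fin j, (q ^ j - q ^ (i : ℕ))) := by
    rintro ⟨p, hp1, hp2⟩
    rw [Nat.card_congr (fiberEquiv e p hp1), Nat.card_prod]
    congr 1
    · rw [card_linearIndependent (le_of_eq hp2.symm), hp2]
    · have hr : finrank F (LinearMap.range (e.mkQ ∘ₗ p.subtype)) = j := by
        have h2 := mkQcomp_range_finrank e p
        rw [hp1, hp2] at h2; omega
      rw [card_li_comp (f := e.mkQ ∘ₗ p.subtype) (by rw [hr]), hr]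
      congr 2
      rw [Nat.card_eq_fintype_card, card_eq_pow_finrank (K := F), mkQcomp_ker_finrank, hp2]
  have hsig : Nat.card (XX F e k j) = Nat.card T *
      ((∏ i : Fin k, (q ^ k - q ^ (i : ℕ))) *
        ((q ^ k) ^ j * ∏ i : Fin j, (q ^ j - q ^ (i : ℕ)))) := by
    set Ψ : XX F e k j → T := fun x =>
      ⟨span F (Set.range x.1.1 ∪ Set.range x.1.2),
        key_rank' e _ _ x.2.1 x.2.2.1 x.2.2.2⟩ with hΨ
    have hcongr : ∀ p : T, Nat.card {x : XX F e k j // Ψ x = p} =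
        (∏ i : Fin k, (q ^ k - q ^ (i : ℕ))) *
          ((q ^ k) ^ j * ∏ i : Fin j, (q ^ j - q ^ (i : ℕ))) := by
      intro p
      rw [Nat.card_congr (Equiv.subtypeEquivRight
        (fun x => ⟨fun h => congrArg Subtype.val h, fun h => Subtype.ext h⟩))]
      exact hfib p
    calc Nat.card (XX F e k j)
        = Nat.card (Σ p : T, {x : XX F e k j // Ψ x = p}) :=
          Nat.card_congr (Equiv.sigmaFiberEquiv Ψ).symm
      _ = ∑ p : T, Nat.card {x : XX F e k j // Ψ x = p} := by
          rw [Nat.card_eq_fintype_card, Fintype.card_sigma]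
          exact Finset.sum_congr rfl fun p _ => (Nat.card_eq_fintype_card).symm
      _ = ∑ _p : T, ((∏ i : Fin k, (q ^ k - q ^ (i : ℕ))) *
            ((q ^ k) ^ j * ∏ i : Fin j, (q ^ j - q ^ (i : ℕ)))) :=
          Finset.sum_congr rfl fun p _ => hcongr p
      _ = Nat.card T * _ := by
          rw [Finset.sum_const, Finset.card_univ, smul_eq_mul, Nat.card_eq_fintype_card]
  rw [← hXg, hsig]
end

lemma cast_prod_sub {q : ℕ} (hq : 1 ≤ q) {a jj : ℕ} (h : jj ≤ a) :
    ((∏ i : Fin jj, (q ^ a - q ^ (i : ℕ)) : ℕ) : ℝ) =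
      ∏ i ∈ Finset.range jj, ((q : ℝ) ^ a - (q : ℝ) ^ i) := by
  rw [← Finset.prod_range (fun i => q ^ a - q ^ i), Nat.cast_prod]
  refine Finset.prod_congr rfl fun i hi => ?_
  rw [Finset.mem_range] at hi
  rw [Nat.cast_sub (Nat.pow_le_pow_right hq (by omega))]
  push_cast
  rfl

lemma prod_sub_pos {q : ℝ} (hq : 1 < q) (jj a : ℕ) (h : jj ≤ a) :
    0 < ∏ i ∈ Finset.range jj, (q ^ a - q ^ i) :=
  Finset.prod_pos fun i hi =>
    sub_pos.2 (pow_lt_pow_right₀ hq (by have := Finset.mem_range.1 hi; omega))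

theorem stmt0 (F : Type*) [Field F] [Fintype F] (n l m k : ℕ)
    (e : Submodule F (Fin (n + l) → F)) (he : finrank F e = l)
    (hkm : k ≤ m) (hkl : k ≤ l) :
    (Nat.card {p : Submodule F (Fin (n + l) → F) //
        finrank F p = m ∧ finrank F (p ⊓ e : Submodule F (Fin (n + l) → F)) = k} : ℝ) =
      (Fintype.card F : ℝ) ^ ((m - k) * (l - k)) *
        gbinom (Fintype.card F) n ((m : ℤ) - k) * gbinom (Fintype.card F) l k := by
  obtain ⟨j, rfl⟩ : ∃ j, m = k + j := ⟨m - k, by omega⟩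
  obtain ⟨t, rfl⟩ : ∃ t, l = k + t := ⟨l - k, by omega⟩
  have hmk : k + j - k = j := by omega
  have hlk : k + t - k = t := by omega
  have hmz : ((k + j : ℕ) : ℤ) - (k : ℕ) = ((j : ℕ) : ℤ) := by push_cast; ring
  rw [hmk, hlk, hmz]
  have hq1 : (1 : ℕ) < Fintype.card F := Fintype.one_lt_card
  have hqR : (1 : ℝ) < (Fintype.card F : ℝ) := by exact_mod_cast hq1
  have hquot : finrank F ((Fin (n + (k + t)) → F) ⧸ e) = n := by
    have h1 := Submodule.finrank_quotient_add_finrank e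
    rw [he] at h1
    have h2 : finrank F (Fin (n + (k + t)) → F) = n + (k + t) := Module.finrank_fin_fun F
    omega
  by_cases hjn : j ≤ n
  · obtain ⟨t', rfl⟩ : ∃ t', n = j + t' := ⟨n - j, by omega⟩
    have hmain := main_count (V := Fin (j + t' + (k + t)) → F) e k j
      (by rw [he]; omega) (by rw [hquot]; omega)
    rw [he, hquot] at hmain
    have hmainR := congrArg (fun x : ℕ => (x : ℝ)) hmain
    simp only [Nat.cast_mul, Nat.cast_pow] at hmainR
    rw [cast_prod_sub hq1.le le_rfl, cast_prod_sub hq1.le le_rfl,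
      cast_prod_sub hq1.le (by omega : k ≤ k + t),
      cast_prod_sub hq1.le (by omega : j ≤ j + t')] at hmainR
    rw [gbinom_eq hqR t' j, gbinom_eq hqR t k]
    set q : ℝ := (Fintype.card F : ℝ)
    set Pk := ∏ i ∈ Finset.range k, (q ^ k - q ^ i) with hPk
    set Pj := ∏ i ∈ Finset.range j, (q ^ j - q ^ i) with hPj
    set Pl := ∏ i ∈ Finset.range k, (q ^ (k + t) - q ^ i) with hPl
    set Pn := ∏ i ∈ Finset.range j, (q ^ (j + t') - q ^ i) with hPn
    have hPk0 : Pk ≠ 0 := (prod_sub_pos hqR k k le_rfl).ne'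
    have hPj0 : Pj ≠ 0 := (prod_sub_pos hqR j j le_rfl).ne'
    have hq0 : (0 : ℝ) < q := lt_trans one_pos hqR
    have hqk0 : ((q ^ k) ^ j : ℝ) ≠ 0 := by positivity
    have hrhs : q ^ (j * t) * (Pn / Pj) * (Pl / Pk) =
        (Pl * ((q ^ (k + t)) ^ j * Pn)) / (Pk * ((q ^ k) ^ j * Pj)) := by
      field_simp
      ring
    have hD : Pk * ((q ^ k) ^ j * Pj) ≠ 0 := by
      exact mul_ne_zero hPk0 (mul_ne_zero hqk0 hPj0)
    rw [hrhs, ← hmainR, mul_div_cancel_right₀ _ hD]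
  · have hE : IsEmpty {p : Submodule F (Fin (n + (k + t)) → F) //
        finrank F p = k + j ∧
          finrank F (p ⊓ e : Submodule F (Fin (n + (k + t)) → F)) = k} := by
      refine ⟨fun x => ?_⟩
      obtain ⟨p, hp1, hp2⟩ := x
      have h2 := mkQcomp_range_finrank e p
      rw [hp1, hp2] at h2
      have h3 : finrank F (LinearMap.range (e.mkQ ∘ₗ p.subtype)) ≤
          finrank F ((Fin (n + (k + t)) → F) ⧸ e) := Submodule.finrank_le _
      rw [hquot] at h3
      omega
    rw [Nat.card_of_isEmpty, gbinom_zero hqR (by omega : n < j)]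
    simp
end

section
/- Let p, q be subspaces of F_q^n with dim p = a, dim q = b, dim(p ∩ q) = x. For integers c, y with x ≤ y ≤ a and b ≤ c ≤ n − a + y, the number of subspaces w of F_q^n with w ⊇ q, dim w = c, and dim(w ∩ p) = y equals q^{(a−y)(c−b−y+x)} · C_q(a−x, y−x) · C_q(n−b−a+x, c−b−y+x). -/
open Module Submodule Finset

section helpers
variable {F : Type*} [Field F] [Fintype F] {V : Type*} [AddCommGroup V] [Module F V] [Finite V]

local notation "Q" => Fintype.card F

lemma card_fiber_const {α β : Type*} [Finite α] [Finite β] (f : α → β) (m : ℕ)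
    (h : ∀ b : β, Nat.card {a : α // f a = b} = m) :
    Nat.card α = Nat.card β * m := by
  classical
  cases nonempty_fintype α; cases nonempty_fintype β
  rw [← Nat.card_congr (Equiv.sigmaFiberEquiv f)]
  simp only [Nat.card_eq_fintype_card, Fintype.card_sigma]
  rw [Finset.sum_congr rfl (fun b _ => by rw [← Nat.card_eq_fintype_card, h b]),
    Finset.sum_const, smul_eq_mul, Finset.card_univ]

lemma card_fiber_const_mul {α β : Type*} [Finite α] [Finite β] (f : α → β) (D R : ℕ)
    (h : ∀ b : β, Nat.card {a : α // f a = b} * D = R) :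
    Nat.card α * D = Nat.card β * R := by
  classical
  cases nonempty_fintype α; cases nonempty_fintype β
  rw [← Nat.card_congr (Equiv.sigmaFiberEquiv f)]
  simp only [Nat.card_eq_fintype_card, Fintype.card_sigma]
  have hsum : ∑ b : β, Fintype.card {a : α // f a = b} * D = ∑ _b : β, R :=
    Finset.sum_congr rfl fun b _ => by
      rw [← Nat.card_eq_fintype_card (α := {a : α // f a = b})]; exact h b
  rw [Finset.sum_mul, hsum, Finset.sum_const, smul_eq_mul, Finset.card_univ]

lemma card_mkQ_fiber (P : Submodule F V) (z : V ⧸ P) :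
    Nat.card {v : V // P.mkQ v = z} = Nat.card P := by
  obtain ⟨v₀, hv₀⟩ := Submodule.Quotient.mk_surjective P z
  refine Nat.card_congr ⟨fun v => ⟨v.1 - v₀, ?_⟩, fun w => ⟨v₀ + w.1, ?_⟩, ?_, ?_⟩
  · rw [← Submodule.Quotient.eq, hv₀]
    exact v.2
  · simp only [Submodule.mkQ_apply, ← hv₀, Submodule.Quotient.eq]
    simpa using neg_mem w.2
  · intro v; ext; simp
  · intro w; ext; simp

lemma card_span_fiber (W : Submodule F V) {k : ℕ} (hW : finrank F W = k) :
    Nat.card {s : Fin k → V // LinearIndependent F s ∧ Submodule.span F (Set.range s) = W} =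
      ∏ i ∈ range k, (Q ^ k - Q ^ i) := by
  have mem : ∀ (s : Fin k → V), Submodule.span F (Set.range s) = W → ∀ i, s i ∈ W := by
    intro s hsp i; rw [← hsp]; exact subset_span ⟨i, rfl⟩
  have e : {s : Fin k → V // LinearIndependent F s ∧ Submodule.span F (Set.range s) = W} ≃
      {t : Fin k → W // LinearIndependent F t} :=
    { toFun := fun ⟨s, hli, hsp⟩ => ⟨fun i => ⟨s i, mem s hsp i⟩, by
        refine LinearIndependent.of_comp W.subtype ?_
        exact hli⟩
      invFun := fun ⟨t, hli⟩ => ⟨fun i => (t i : V), hli.map' W.subtype (ker_subtype W), by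
        have hsp : Submodule.span F (Set.range t) = ⊤ :=
          hli.span_eq_top_of_card_eq_finrank' (by simp [hW])
        have : Set.range (fun i => (t i : V)) = W.subtype '' (Set.range t) := by
          ext v; simp
        rw [this, span_image, hsp, Submodule.map_top, range_subtype]⟩
      left_inv := fun ⟨s, hli, hsp⟩ => rfl
      right_inv := fun ⟨t, hli⟩ => rfl }
  rw [Nat.card_congr e]
  have := card_linearIndependent (K := F) (V := W) (k := k) (by rw [hW])
  rwa [hW, Fin.prod_univ_eq_prod_range (fun i => Q ^ k - Q ^ i)] at this

instance fin_submodule : Finite (Submodule F V) :=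
  Finite.of_injective _ (SetLike.coe_injective (A := Submodule F V))

lemma card_indep_mkQ (P : Submodule F V) {k : ℕ} (hk : k ≤ finrank F (V ⧸ P)) :
    Nat.card {s : Fin k → V // LinearIndependent F (P.mkQ ∘ s)} =
      Nat.card P ^ k * ∏ i ∈ range k, (Q ^ (finrank F (V ⧸ P)) - Q ^ i) := by
  classical
  set f : {s : Fin k → V // LinearIndependent F (P.mkQ ∘ s)} →
      {t : Fin k → V ⧸ P // LinearIndependent F t} := fun s => ⟨P.mkQ ∘ s.1, s.2⟩
  have hfib : ∀ t : {t : Fin k → V ⧸ P // LinearIndependent F t},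
      Nat.card {a // f a = t} = Nat.card P ^ k := by
    rintro ⟨t, ht⟩
    have e1 : {a // f a = ⟨t, ht⟩} ≃ {s : Fin k → V // P.mkQ ∘ s = t} :=
      { toFun := fun a => ⟨a.1.1, congrArg Subtype.val a.2⟩
        invFun := fun s => ⟨⟨s.1, by rw [show ⇑P.mkQ ∘ s.1 = t from s.2]; exact ht⟩, Subtype.ext s.2⟩
        left_inv := fun a => by ext; rfl
        right_inv := fun s => rfl }
    have e2 : {s : Fin k → V // P.mkQ ∘ s = t} ≃ ∀ i, {v : V // P.mkQ v = t i} :=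
      { toFun := fun s i => ⟨s.1 i, congrFun s.2 i⟩
        invFun := fun g => ⟨fun i => (g i).1, funext fun i => (g i).2⟩
        left_inv := fun s => rfl
        right_inv := fun g => rfl }
    rw [Nat.card_congr (e1.trans e2), Nat.card_pi,
      Finset.prod_congr rfl (fun i _ => card_mkQ_fiber P (t i)), Finset.prod_const,
      Finset.card_univ, Fintype.card_fin]
  haveI : Finite (V ⧸ P) := Quotient.finite _
  rw [card_fiber_const f _ hfib, card_linearIndependent (K := F) (V := V ⧸ P) hk,
    Fin.prod_univ_eq_prod_range (fun i => Q ^ finrank F (V ⧸ P) - Q ^ i) k, mul_comm]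

lemma card_inf_bot (P : Submodule F V) {k : ℕ} (hk : k ≤ finrank F (V ⧸ P)) :
    Nat.card {W : Submodule F V // finrank F W = k ∧ W ⊓ P = ⊥} *
      ∏ i ∈ range k, (Q ^ k - Q ^ i) =
    Nat.card P ^ k * ∏ i ∈ range k, (Q ^ (finrank F (V ⧸ P)) - Q ^ i) := by
  classical
  have key : ∀ (s : Fin k → V), LinearIndependent F (P.mkQ ∘ s) →
      LinearIndependent F s ∧ finrank F (span F (Set.range s)) = k ∧
        span F (Set.range s) ⊓ P = ⊥ := by
    intro s hs
    have hli : LinearIndependent F s := hs.of_comp P.mkQ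
    refine ⟨hli, by rw [finrank_span_eq_card hli]; simp, ?_⟩
    rw [eq_bot_iff]
    rintro v ⟨hv1, hv2⟩
    obtain ⟨c, rfl⟩ := (mem_span_range_iff_exists_fun F).mp hv1
    have := Fintype.linearIndependent_iff.mp hs c (by
      have hrw : ∑ x, c x • (⇑P.mkQ ∘ s) x = P.mkQ (∑ i, c i • s i) := by
        simp [map_sum, map_smul]
      rw [hrw, Submodule.mkQ_apply, Submodule.Quotient.mk_eq_zero]
      exact hv2)
    simp [this]
  set f : {s : Fin k → V // LinearIndependent F (P.mkQ ∘ s)} →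
      {W : Submodule F V // finrank F W = k ∧ W ⊓ P = ⊥} :=
    fun s => ⟨span F (Set.range s.1), (key s.1 s.2).2⟩
  have hfib : ∀ W : {W : Submodule F V // finrank F W = k ∧ W ⊓ P = ⊥},
      Nat.card {a // f a = W} = ∏ i ∈ range k, (Q ^ k - Q ^ i) := by
    rintro ⟨W, hWk, hWP⟩
    have e : {a // f a = ⟨W, hWk, hWP⟩} ≃
        {s : Fin k → V // LinearIndependent F s ∧ span F (Set.range s) = W} :=
      { toFun := fun a => ⟨a.1.1, (key a.1.1 a.1.2).1, congrArg Subtype.val a.2⟩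
        invFun := fun s => ⟨⟨s.1, s.2.1.map (by
            rw [Submodule.ker_mkQ, s.2.2]
            exact disjoint_iff.mpr hWP)⟩, Subtype.ext s.2.2⟩
        left_inv := fun a => by ext; rfl
        right_inv := fun s => rfl }
    rw [Nat.card_congr e, card_span_fiber W hWk]
  rw [← card_fiber_const f _ hfib, card_indep_mkQ P hk]

lemma finrank_map_mkQ_add (q u : Submodule F V) (h : q ≤ u) :
    finrank F (Submodule.map q.mkQ u) + finrank F q = finrank F u := by
  haveI : FiniteDimensional F V := inferInstance
  have hr : LinearMap.range (q.mkQ.comp u.subtype) = Submodule.map q.mkQ u := by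
    rw [LinearMap.range_comp, Submodule.range_subtype]
  have hk : LinearMap.ker (q.mkQ.comp u.subtype) = Submodule.comap u.subtype q := by
    rw [LinearMap.ker_comp, Submodule.ker_mkQ]
  have := LinearMap.finrank_range_add_finrank_ker (q.mkQ.comp u.subtype)
  rw [hr, hk] at this
  rw [← this, LinearEquiv.finrank_eq (Submodule.comapSubtypeEquivOfLe h)]

lemma card_dim_eq {k : ℕ} (hk : k ≤ finrank F V) :
    Nat.card {W : Submodule F V // finrank F W = k} * ∏ i ∈ range k, (Q ^ k - Q ^ i) =
      ∏ i ∈ range k, (Q ^ finrank F V - Q ^ i) := by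
  have hQ : finrank F (V ⧸ (⊥ : Submodule F V)) = finrank F V :=
    LinearEquiv.finrank_eq (Submodule.quotEquivOfEqBot ⊥ rfl)
  have e : {W : Submodule F V // finrank F W = k ∧ W ⊓ ⊥ = ⊥} ≃
      {W : Submodule F V // finrank F W = k} :=
    Equiv.subtypeEquivRight (fun W => by simp)
  have := card_inf_bot (V := V) (⊥ : Submodule F V) (k := k) (by rw [hQ]; exact hk)
  rw [Nat.card_congr e, hQ] at this
  rw [this, Nat.card_eq_fintype_card (α := (⊥ : Submodule F V))]
  simp

lemma card_between (p q0 : Submodule F V) {xx yy : ℕ} (hq0p : q0 ≤ p)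
    (hx : finrank F q0 = xx) (hxy : xx ≤ yy) (hyp : yy ≤ finrank F p) :
    Nat.card {u : Submodule F V // q0 ≤ u ∧ u ≤ p ∧ finrank F u = yy} *
      ∏ i ∈ range (yy - xx), (Q ^ (yy - xx) - Q ^ i) =
    ∏ i ∈ range (yy - xx), (Q ^ (finrank F p - xx) - Q ^ i) := by
  classical
  set q0' : Submodule F ↥p := Submodule.comap p.subtype q0 with hq0'
  haveI : Finite (↥p ⧸ q0') := Quotient.finite _
  have hq0'x : finrank F q0' = xx := by
    rw [LinearEquiv.finrank_eq (Submodule.comapSubtypeEquivOfLe hq0p), hx]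
  have hM : finrank F (↥p ⧸ q0') = finrank F p - xx := by
    have := Submodule.finrank_quotient_add_finrank q0'
    omega
  have e : {u : Submodule F V // q0 ≤ u ∧ u ≤ p ∧ finrank F u = yy} ≃
      {W : Submodule F (↥p ⧸ q0') // finrank F W = yy - xx} := by
    refine ⟨fun u => ⟨Submodule.map q0'.mkQ (Submodule.comap p.subtype u.1), ?_⟩,
      fun W => ⟨Submodule.map p.subtype (Submodule.comap q0'.mkQ W.1), ?_, ?_, ?_⟩, ?_, ?_⟩
    · obtain ⟨u, h1, h2, h3⟩ := u
      show finrank F (Submodule.map q0'.mkQ (Submodule.comap p.subtype u)) = yy - xx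
      have hle : q0' ≤ Submodule.comap p.subtype u := Submodule.comap_mono h1
      have h4 : finrank F (Submodule.comap p.subtype u) = yy := by
        rw [LinearEquiv.finrank_eq (Submodule.comapSubtypeEquivOfLe h2), h3]
      have := finrank_map_mkQ_add q0' (Submodule.comap p.subtype u) hle
      omega
    · obtain ⟨W, hW⟩ := W
      have : q0 = Submodule.map p.subtype q0' := by
        rw [hq0', Submodule.map_comap_subtype, inf_eq_right.mpr hq0p]
      rw [this]
      exact Submodule.map_mono (Submodule.le_comap_mkQ q0' W)
    · exact Submodule.map_subtype_le p _
    · obtain ⟨W, hW⟩ := W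
      show finrank F (Submodule.map p.subtype (Submodule.comap q0'.mkQ W)) = yy
      have hle : q0' ≤ Submodule.comap q0'.mkQ W := Submodule.le_comap_mkQ q0' W
      have h1 : Submodule.map q0'.mkQ (Submodule.comap q0'.mkQ W) = W :=
        Submodule.map_comap_eq_of_surjective (Submodule.Quotient.mk_surjective q0') W
      have h2 := finrank_map_mkQ_add q0' (Submodule.comap q0'.mkQ W) hle
      rw [h1, hW, hq0'x] at h2
      rw [Submodule.finrank_map_subtype_eq]
      omega
    · rintro ⟨u, h1, h2, h3⟩
      ext1
      simp only
      rw [Submodule.comap_map_eq, Submodule.ker_mkQ]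
      rw [sup_eq_left.mpr (Submodule.comap_mono h1), Submodule.map_comap_subtype,
        inf_eq_right.mpr h2]
    · rintro ⟨W, hW⟩
      ext1
      simp only
      rw [Submodule.comap_map_eq, Submodule.ker_subtype, sup_bot_eq,
        Submodule.map_comap_eq_of_surjective (Submodule.Quotient.mk_surjective q0')]
  rw [Nat.card_congr e, card_dim_eq (by omega), hM]

noncomputable def equiv_fixed_inter (p q u : Submodule F V) (hup : u ≤ p) (hpqu : p ⊓ q ≤ u)
    {cc : ℕ} (hcc : finrank F (q ⊔ u : Submodule F V) ≤ cc) :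
    {w : Submodule F V // q ≤ w ∧ finrank F w = cc ∧ w ⊓ p = u} ≃
    {W : Submodule F (V ⧸ (q ⊔ u : Submodule F V)) //
      finrank F W = cc - finrank F (q ⊔ u : Submodule F V) ∧
      W ⊓ (Submodule.map (q ⊔ u : Submodule F V).mkQ p) = ⊥} := by
  classical
  set s : Submodule F V := q ⊔ u with hs
  have hsp : s ⊓ p = u := by
    rw [hs, sup_comm, sup_inf_assoc_of_le q hup, inf_comm q p]
    exact sup_eq_left.mpr hpqu
  have hmap_s : Submodule.map s.mkQ s = ⊥ := by
    rw [eq_bot_iff]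
    rintro v ⟨v₀, hv₀, rfl⟩
    simpa [Submodule.mkQ_apply, Submodule.Quotient.mk_eq_zero] using hv₀
  refine ⟨fun w => ⟨Submodule.map s.mkQ w.1, ?_, ?_⟩,
    fun W => ⟨Submodule.comap s.mkQ W.1, ?_, ?_, ?_⟩, ?_, ?_⟩
  · obtain ⟨w, h1, h2, h3⟩ := w
    show finrank F (Submodule.map s.mkQ w) = cc - finrank F s
    have hsw : s ≤ w := sup_le h1 (h3 ▸ inf_le_left)
    have := finrank_map_mkQ_add s w hsw
    omega
  · obtain ⟨w, h1, h2, h3⟩ := w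
    show Submodule.map s.mkQ w ⊓ Submodule.map s.mkQ p = ⊥
    have hsw : s ≤ w := sup_le h1 (h3 ▸ inf_le_left)
    rw [Submodule.map_inf_eq_map_inf_comap, Submodule.comap_map_eq, Submodule.ker_mkQ]
    have : w ⊓ (p ⊔ s) = s := by
      rw [inf_comm, sup_comm p s, sup_inf_assoc_of_le p hsw, inf_comm p w, h3]
      exact sup_eq_left.mpr (hs ▸ le_sup_right)
    rw [this, hmap_s]
  · obtain ⟨W, h1, h2⟩ := W
    exact le_trans (le_sup_left (b := u)) (Submodule.le_comap_mkQ s W)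
  · obtain ⟨W, h1, h2⟩ := W
    show finrank F (Submodule.comap s.mkQ W) = cc
    have := finrank_map_mkQ_add s (Submodule.comap s.mkQ W) (Submodule.le_comap_mkQ s W)
    rw [Submodule.map_comap_eq_of_surjective (Submodule.Quotient.mk_surjective s) W, h1] at this
    omega
  · obtain ⟨W, h1, h2⟩ := W
    show Submodule.comap s.mkQ W ⊓ p = u
    have hle : Submodule.comap s.mkQ W ⊓ p ≤ u := by
      have hmap : Submodule.map s.mkQ (Submodule.comap s.mkQ W ⊓ p) ≤
          W ⊓ Submodule.map s.mkQ p := by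
        refine le_inf (le_trans (Submodule.map_mono inf_le_left) ?_)
          (Submodule.map_mono inf_le_right)
        rw [Submodule.map_comap_eq_of_surjective (Submodule.Quotient.mk_surjective s) W]
      rw [h2] at hmap
      have hker : Submodule.comap s.mkQ W ⊓ p ≤ s := by
        intro v hv
        have : s.mkQ v = 0 := by
          have := hmap ⟨v, hv, rfl⟩
          simpa using this
        rwa [Submodule.mkQ_apply, Submodule.Quotient.mk_eq_zero] at this
      calc Submodule.comap s.mkQ W ⊓ p ≤ s ⊓ p := le_inf hker inf_le_right
        _ = u := hsp
    refine le_antisymm hle (le_inf ?_ hup)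
    exact le_trans (le_sup_right (a := q)) (Submodule.le_comap_mkQ s W)
  · rintro ⟨w, h1, h2, h3⟩
    ext1
    show Submodule.comap s.mkQ (Submodule.map s.mkQ w) = w
    have hsw : s ≤ w := sup_le h1 (h3 ▸ inf_le_left)
    rw [Submodule.comap_map_eq, Submodule.ker_mkQ, sup_eq_left.mpr hsw]
  · rintro ⟨W, h1, h2⟩
    ext1
    exact Submodule.map_comap_eq_of_surjective (Submodule.Quotient.mk_surjective s) W

lemma gbinom_eq_s3 {Qr : ℝ} (hQ : 1 < Qr) {A K : ℕ} (hK : K ≤ A) :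
    gbinom Qr A K = (∏ i ∈ range K, (Qr ^ A - Qr ^ i)) / (∏ i ∈ range K, (Qr ^ K - Qr ^ i)) := by
  have hQ0 : (0 : ℝ) < Qr := lt_trans one_pos hQ
  have hpowlt : ∀ {m l : ℕ}, m < l → Qr ^ m < Qr ^ l := fun h => pow_lt_pow_right₀ hQ h
  have hne1 : ∀ {m : ℕ}, 1 ≤ m → Qr ^ m - 1 ≠ 0 := by
    intro m hm
    have : (1 : ℝ) < Qr ^ m := one_lt_pow₀ hQ (by omega)
    linarith
  rw [gbinom, if_neg (by omega), Int.toNat_natCast]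
  have hnum : ∀ i ∈ range K, (Qr ^ ((A : ℤ) - K + i + 1) - 1) / (Qr ^ ((i : ℤ) + 1) - 1) =
      (Qr ^ (A - K + i + 1) - 1) / (Qr ^ (i + 1) - 1) := by
    intro i hi
    rw [show (A : ℤ) - K + i + 1 = ((A - K + i + 1 : ℕ) : ℤ) by push_cast; omega,
      show (i : ℤ) + 1 = ((i + 1 : ℕ) : ℤ) by push_cast; ring, zpow_natCast, zpow_natCast]
  rw [Finset.prod_congr rfl hnum, Finset.prod_div_distrib]
  have hsplit : ∀ (B : ℕ), K ≤ B → ∏ i ∈ range K, (Qr ^ B - Qr ^ i) =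
      (∏ i ∈ range K, Qr ^ i) * ∏ i ∈ range K, (Qr ^ (B - K + i + 1) - 1) := by
    intro B hB
    have h1 : ∏ i ∈ range K, (Qr ^ B - Qr ^ i) =
        ∏ i ∈ range K, (Qr ^ i * (Qr ^ (B - i) - 1)) := by
      refine Finset.prod_congr rfl fun i hi => ?_
      rw [Finset.mem_range] at hi
      rw [mul_sub, mul_one, ← pow_add, show i + (B - i) = B by omega]
    have h2 : ∏ i ∈ range K, (Qr ^ (B - K + i + 1) - 1) =
        ∏ i ∈ range K, (Qr ^ (B - i) - 1) := by
      rw [← Finset.prod_range_reflect (fun i => Qr ^ (B - K + i + 1) - 1) K]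
      refine Finset.prod_congr rfl fun i hi => ?_
      rw [Finset.mem_range] at hi
      congr 2
      omega
    rw [h1, h2, Finset.prod_mul_distrib]
  have hK2 : ∏ i ∈ range K, (Qr ^ (K - K + i + 1) - 1) = ∏ i ∈ range K, (Qr ^ (i + 1) - 1) := by
    refine Finset.prod_congr rfl fun i hi => ?_
    congr 2
    omega
  rw [hsplit A hK, hsplit K le_rfl, hK2]
  rw [mul_div_mul_left _ _ (Finset.prod_ne_zero_iff.mpr fun i _ => pow_ne_zero i (ne_of_gt hQ0))]

lemma cast_prodsub {Qn : ℕ} (hQ : 1 < Qn) {B K : ℕ} (h : K ≤ B) :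
    ((∏ i ∈ range K, (Qn ^ B - Qn ^ i) : ℕ) : ℝ) =
      ∏ i ∈ range K, ((Qn : ℝ) ^ B - (Qn : ℝ) ^ i) := by
  rw [Nat.cast_prod]
  refine Finset.prod_congr rfl fun i hi => ?_
  rw [Finset.mem_range] at hi
  rw [Nat.cast_sub (Nat.pow_le_pow_right (by omega) (by omega))]
  push_cast
  ring

lemma prodsub_pos {Qn : ℕ} (hQ : 1 < Qn) (K : ℕ) :
    0 < ∏ i ∈ range K, (Qn ^ K - Qn ^ i) := by
  refine Finset.prod_pos fun i hi => ?_
  rw [Finset.mem_range] at hi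
  have := Nat.pow_lt_pow_right hQ hi
  omega

end helpers

open Module

theorem stmt3 (F : Type*) [Field F] [Fintype F] (n a b x c y : ℕ)
    (p q : Submodule F (Fin n → F))
    (hp : finrank F p = a) (hq : finrank F q = b)
    (hpq : finrank F (p ⊓ q : Submodule F (Fin n → F)) = x)
    (hxy : x ≤ y) (hya : y ≤ a) (hbc : b ≤ c) (hc : (c : ℤ) ≤ (n : ℤ) - a + y) :
    (Nat.card {w : Submodule F (Fin n → F) //
        q ≤ w ∧ finrank F w = c ∧ finrank F (w ⊓ p : Submodule F (Fin n → F)) = y} : ℝ) =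
      (Fintype.card F : ℝ) ^ (((a : ℤ) - y) * ((c : ℤ) - b - y + x)) *
        gbinom (Fintype.card F) ((a : ℤ) - x) ((y : ℤ) - x) *
        gbinom (Fintype.card F) ((n : ℤ) - b - a + x) ((c : ℤ) - b - y + x) := by
  classical
  set Qn : ℕ := Fintype.card F with hQn
  have hQ1 : 1 < Qn := Fintype.one_lt_card
  have hQR : 1 < (Qn : ℝ) := by exact_mod_cast hQ1
  have hnV : finrank F (Fin n → F) = n := Module.finrank_fin_fun F
  have hxb : x ≤ b := by rw [← hpq, ← hq]; exact Submodule.finrank_mono inf_le_right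
  have han : a ≤ n := by
    have h := Submodule.finrank_le p
    rw [hp, hnV] at h
    exact h
  have hsupn : a + b ≤ n + x := by
    have h1 := finrank_sup_add_finrank_inf_eq p q
    have h2 := Submodule.finrank_le (p ⊔ q)
    rw [hp, hq, hpq] at h1
    rw [hnV] at h2
    omega
  by_cases hdeg : c + x < b + y
  · -- degenerate case: the set is empty and the q-binomial vanishes
    have hEmpty : IsEmpty {w : Submodule F (Fin n → F) //
        q ≤ w ∧ finrank F w = c ∧ finrank F (w ⊓ p : Submodule F (Fin n → F)) = y} := by
      refine ⟨?_⟩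
      rintro ⟨w, h1, h2, h3⟩
      have e1 : q ⊓ (w ⊓ p) = p ⊓ q := by
        rw [← inf_assoc, inf_eq_left.mpr h1, inf_comm q p]
      have e2 := finrank_sup_add_finrank_inf_eq q (w ⊓ p)
      have e3 := Submodule.finrank_mono (sup_le h1 inf_le_left : q ⊔ w ⊓ p ≤ w)
      rw [e1, hq, h3, hpq] at e2
      rw [h2] at e3
      omega
    have hz : gbinom (Qn : ℝ) ((n : ℤ) - b - a + x) ((c : ℤ) - b - y + x) = 0 := by
      rw [gbinom, if_pos (by omega)]
    rw [Nat.card_of_isEmpty, hz, mul_zero, Nat.cast_zero]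
  · push_neg at hdeg
    set k : ℕ := c + x - b - y with hk
    -- counting the possible u = w ⊓ p
    have hA := card_between p (p ⊓ q) inf_le_left hpq hxy (by rw [hp]; exact hya)
    rw [hp] at hA
    set Dy : ℕ := ∏ i ∈ Finset.range (y - x), (Qn ^ (y - x) - Qn ^ i) with hDy
    set Py : ℕ := ∏ i ∈ Finset.range (y - x), (Qn ^ (a - x) - Qn ^ i) with hPy
    set Dk : ℕ := ∏ i ∈ Finset.range k, (Qn ^ k - Qn ^ i) with hDk
    set Pk : ℕ := ∏ i ∈ Finset.range k, (Qn ^ (n + x - a - b) - Qn ^ i) with hPk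
    set Tw := {w : Submodule F (Fin n → F) //
        q ≤ w ∧ finrank F w = c ∧ finrank F (w ⊓ p : Submodule F (Fin n → F)) = y} with hTw
    set Tu := {u : Submodule F (Fin n → F) // p ⊓ q ≤ u ∧ u ≤ p ∧ finrank F u = y} with hTu
    set f : Tw → Tu := fun w =>
      ⟨w.1 ⊓ p, le_inf (le_trans inf_le_right w.2.1) inf_le_left, inf_le_right, w.2.2.2⟩
      with hf
    have key : ∀ u : Tu, Nat.card {w : Tw // f w = u} * Dk = Qn ^ ((a - y) * k) * Pk := by
      rintro ⟨u, hu1, hu2, hu3⟩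
      set s : Submodule F (Fin n → F) := q ⊔ u with hs
      haveI : Finite ((Fin n → F) ⧸ (q ⊔ u : Submodule F (Fin n → F))) := Quotient.finite _
      have hqu : q ⊓ u = p ⊓ q :=
        le_antisymm (le_inf (le_trans inf_le_right hu2) inf_le_left)
          (le_inf inf_le_right hu1)
      have hds : finrank F (q ⊔ u : Submodule F (Fin n → F)) + x = b + y := by
        have := finrank_sup_add_finrank_inf_eq q u
        rw [hqu, hq, hu3, hpq] at this
        omega
      have hcc : finrank F (q ⊔ u : Submodule F (Fin n → F)) ≤ c := by omega
      have e1 : {w : Tw // f w = ⟨u, hu1, hu2, hu3⟩} ≃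
          {w : Submodule F (Fin n → F) // q ≤ w ∧ finrank F w = c ∧ w ⊓ p = u} :=
        { toFun := fun w => ⟨w.1.1, w.1.2.1, w.1.2.2.1, congrArg Subtype.val w.2⟩
          invFun := fun w => ⟨⟨w.1, w.2.1, w.2.2.1, by rw [w.2.2.2]; exact hu3⟩,
            Subtype.ext w.2.2.2⟩
          left_inv := fun w => by ext; rfl
          right_inv := fun w => rfl }
      have e2 := equiv_fixed_inter p q u hu2 hu1 hcc
      -- dimension bookkeeping
      have hVq : finrank F ((Fin n → F) ⧸ (q ⊔ u : Submodule F (Fin n → F))) + finrank F (q ⊔ u : Submodule F (Fin n → F)) = n := by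
        have := Submodule.finrank_quotient_add_finrank (q ⊔ u : Submodule F (Fin n → F))
        rw [hnV] at this
        exact this
      have hps : p ⊓ (q ⊔ u) = u := by
        rw [inf_comm, sup_comm q u, sup_inf_assoc_of_le q hu2, inf_comm q p]
        exact sup_eq_left.mpr hu1
      have hmap_s : Submodule.map (q ⊔ u : Submodule F (Fin n → F)).mkQ (q ⊔ u) = ⊥ := by
        rw [eq_bot_iff]
        rintro v ⟨v₀, hv₀, rfl⟩
        simpa [Submodule.mkQ_apply, Submodule.Quotient.mk_eq_zero] using hv₀
      have hPrank : finrank F (Submodule.map (q ⊔ u : Submodule F (Fin n → F)).mkQ p) = a - y := by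
        have h1 := finrank_map_mkQ_add (q ⊔ u) (p ⊔ (q ⊔ u)) le_sup_right
        have h2 : Submodule.map (q ⊔ u : Submodule F (Fin n → F)).mkQ (p ⊔ (q ⊔ u)) = (Submodule.map (q ⊔ u : Submodule F (Fin n → F)).mkQ p) := by
          rw [Submodule.map_sup, hmap_s, sup_bot_eq]
        have h3 := finrank_sup_add_finrank_inf_eq p (q ⊔ u)
        rw [hps, hp, hu3] at h3
        rw [h2] at h1
        omega
      have hE : finrank F (((Fin n → F) ⧸ (q ⊔ u : Submodule F (Fin n → F))) ⧸ (Submodule.map (q ⊔ u : Submodule F (Fin n → F)).mkQ p)) = n + x - a - b := by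
        have := Submodule.finrank_quotient_add_finrank (Submodule.map (q ⊔ u : Submodule F (Fin n → F)).mkQ p)
        rw [hPrank] at this
        omega
      have hcard := card_inf_bot (V := (Fin n → F) ⧸ (q ⊔ u : Submodule F (Fin n → F))) (Submodule.map (q ⊔ u : Submodule F (Fin n → F)).mkQ p) (k := c - finrank F (q ⊔ u : Submodule F (Fin n → F)))
        (by rw [hE]; omega)
      have hkk : c - finrank F (q ⊔ u : Submodule F (Fin n → F)) = k := by omega
      have hcardP : Nat.card (Submodule.map (q ⊔ u : Submodule F (Fin n → F)).mkQ p) = Qn ^ (a - y) := by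
        haveI : Fintype (Submodule.map (q ⊔ u : Submodule F (Fin n → F)).mkQ p) := Fintype.ofFinite _
        rw [Nat.card_eq_fintype_card, card_eq_pow_finrank (K := F) (V := (Submodule.map (q ⊔ u : Submodule F (Fin n → F)).mkQ p)), hPrank]
      rw [hkk, hE, hcardP] at hcard
      rw [Nat.card_congr (e1.trans e2), hkk] at *
      rw [hcard, ← pow_mul]
    have hM := card_fiber_const_mul f Dk (Qn ^ ((a - y) * k) * Pk) key
    -- final numeric computation
    have hDy0 : (Dy : ℝ) ≠ 0 := Nat.cast_ne_zero.mpr (prodsub_pos hQ1 (y - x)).ne'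
    have hDk0 : (Dk : ℝ) ≠ 0 := Nat.cast_ne_zero.mpr (prodsub_pos hQ1 k).ne'
    have keyN : Nat.card Tw * (Dy * Dk) = Qn ^ ((a - y) * k) * Py * Pk := by
      calc Nat.card Tw * (Dy * Dk) = (Nat.card Tw * Dk) * Dy := by ring
        _ = (Nat.card Tu * (Qn ^ ((a - y) * k) * Pk)) * Dy := by rw [hM]
        _ = (Nat.card Tu * Dy) * (Qn ^ ((a - y) * k) * Pk) := by ring
        _ = Py * (Qn ^ ((a - y) * k) * Pk) := by rw [hA]
        _ = _ := by ring
    have hfinal : (Nat.card Tw : ℝ) * (Dy * Dk) = (Qn : ℝ) ^ ((a - y) * k) * Py * Pk := by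
      exact_mod_cast keyN
    set Mw : ℕ := Nat.card Tw with hMw
    have g1 : gbinom (Qn : ℝ) ((a : ℤ) - x) ((y : ℤ) - x) = (Py : ℝ) / (Dy : ℝ) := by
      rw [show (a : ℤ) - x = ((a - x : ℕ) : ℤ) by omega,
        show (y : ℤ) - x = ((y - x : ℕ) : ℤ) by omega,
        gbinom_eq_s3 hQR (by omega : y - x ≤ a - x),
        ← cast_prodsub hQ1 (by omega : y - x ≤ a - x), ← cast_prodsub hQ1 le_rfl]
    have g2 : gbinom (Qn : ℝ) ((n : ℤ) - b - a + x) ((c : ℤ) - b - y + x) =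
        (Pk : ℝ) / (Dk : ℝ) := by
      rw [show (n : ℤ) - b - a + x = ((n + x - a - b : ℕ) : ℤ) by omega,
        show (c : ℤ) - b - y + x = ((k : ℕ) : ℤ) by omega,
        gbinom_eq_s3 hQR (by omega : k ≤ n + x - a - b),
        ← cast_prodsub hQ1 (by omega : k ≤ n + x - a - b), ← cast_prodsub hQ1 le_rfl]
    rw [g1, g2, show ((a : ℤ) - y) * ((c : ℤ) - b - y + x) = (((a - y) * k : ℕ) : ℤ) by
        push_cast; rw [show ((a - y : ℕ) : ℤ) = (a : ℤ) - y by omega,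
          show ((k : ℕ) : ℤ) = (c : ℤ) - b - y + x by omega], zpow_natCast]
    rw [show (Qn : ℝ) ^ ((a - y) * k) * ((Py : ℝ) / (Dy : ℝ)) * ((Pk : ℝ) / (Dk : ℝ)) =
        ((Qn : ℝ) ^ ((a - y) * k) * Py * Pk) / ((Dy : ℝ) * (Dk : ℝ)) by ring,
      eq_div_iff (mul_ne_zero hDy0 hDk0)]
    linear_combination hfinal
end

section
/- If p is an a-dimensional subspace of F_q^n, then the number of c-dimensional subspaces w of F_q^n with dim(p ∩ w) = y equals q^{(a−y)(c−y)} · C_q(a, y) · C_q(n−a, c−y). -/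
open Module

/-! A `c`-dimensional `w` with `dim (p ⊓ w) = y` is determined by `u = p ⊓ w`, a `y`-dimensional
subspace of `p`, together with `w / u`, a `(c - y)`-dimensional subspace of `V / u` meeting
`p / u` trivially. A subspace `s` meeting a subspace `P` trivially and having image `v` in `V / P`
is the range of a section of `V → V / P` over `v`; these sections form a torsor under `v →ₗ P`,
so there are `q ^ (dim P * dim v)` such `s`, and summing over the `(c - y)`-dimensional `v` in
`V / p ≅ (V / u) / (p / u)` gives `q ^ ((a - y) (c - y)) C_q(n - a, c - y)`. The number
`C_q(m, k)` of `k`-dimensional subspaces comes from double counting the pairs `(w, x)` with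
`0 ≠ x ∈ w`, which gives `C_q(m, k + 1) (q ^ (k + 1) - 1) = (q ^ m - 1) C_q(m - 1, k)`. -/

theorem gbinom_of_neg (q : ℝ) (a : ℤ) {k : ℤ} (hk : k < 0) : gbinom q a k = 0 :=
  if_pos hk

theorem gbinom_zero_right (q : ℝ) (a : ℤ) : gbinom q a 0 = 1 := by
  simp [gbinom]

theorem gbinom_succ_right (q : ℝ) (a : ℤ) (k : ℕ) :
    gbinom q a (k + 1) = gbinom q (a - 1) k * ((q ^ a - 1) / (q ^ (k + 1) - 1)) := by
  simp only [gbinom, show ¬((k : ℤ) + 1 < 0) by omega, show ¬((k : ℤ) < 0) by omega,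
    if_false, Int.toNat_natCast, show ((k : ℤ) + 1).toNat = k + 1 by omega, Finset.prod_range_succ]
  congr 3
  · ext i; congr 3; ring
  · congr 1; ring

instance {R M : Type*} [Semiring R] [Finite R] [AddCommMonoid M] [Module R M] [Module.Finite R M] :
    Finite (Submodule R M) :=
  have := Module.finite_of_finite R (M := M)
  Finite.of_injective _ SetLike.coe_injective

theorem Nat.cast_card_sigma_eq_mul {R ι : Type*} [Semiring R] [Finite ι] {β : ι → Type*}
    [∀ i, Finite (β i)] {r : R} (h : ∀ i, (Nat.card (β i) : R) = r) :
    (Nat.card (Σ i, β i) : R) = Nat.card ι * r := by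
  have := Fintype.ofFinite ι
  rw [Nat.card_sigma, Nat.cast_sum, Finset.sum_congr rfl fun i _ => h i, Finset.sum_const,
    Finset.card_univ, nsmul_eq_mul, Nat.card_eq_fintype_card]

section Module

variable {K V W : Type*} [DivisionRing K] [AddCommGroup V] [Module K V] [AddCommGroup W]
  [Module K W]

theorem natCard_subtype_ne_zero {R : Type*} [Ring R] [Finite K] [Module.Finite K V] :
    (Nat.card {x : V // x ≠ 0} : R) = Nat.card K ^ finrank K V - 1 := by
  classical
  have := Module.finite_of_finite K (M := V)
  have h := Nat.card_congr (Equiv.optionSubtypeNe (0 : V))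
  rw [Finite.card_option, Module.natCard_eq_pow_finrank (K := K) (V := V)] at h
  rw [eq_sub_iff_add_eq, ← Nat.cast_pow, ← h, Nat.cast_succ]

namespace Submodule

theorem finrank_map_add_finrank_inf_ker [Module.Finite K V] (f : V →ₗ[K] W) (w : Submodule K V) :
    finrank K (w.map f) + finrank K (w ⊓ LinearMap.ker f : Submodule K V) = finrank K w := by
  have h := (f.domRestrict w).finrank_range_add_finrank_ker
  rwa [LinearMap.range_domRestrict, LinearMap.ker_domRestrict, ← finrank_map_subtype_eq,
    map_comap_subtype] at h

theorem finrank_comap_mkQ [Module.Finite K V] (s : Submodule K V) (w : Submodule K (V ⧸ s)) :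
    finrank K (w.comap s.mkQ) = finrank K w + finrank K s := by
  have h := finrank_map_add_finrank_inf_ker s.mkQ (w.comap s.mkQ)
  rwa [map_comap_eq_of_surjective s.mkQ_surjective, ker_mkQ,
    inf_eq_right.mpr (le_comap_mkQ s w), eq_comm] at h

theorem finrank_map_mkQ_of_inf_eq_bot [Module.Finite K V] {P w : Submodule K V} (h : P ⊓ w = ⊥) :
    finrank K (w.map P.mkQ) = finrank K w := by
  have := finrank_map_add_finrank_inf_ker P.mkQ w
  rwa [ker_mkQ, inf_comm, h, finrank_bot, add_zero] at this

theorem map_mkQ_inf_eq_bot_iff (s p : Submodule K V) (w : Submodule K (V ⧸ s)) :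
    p.map s.mkQ ⊓ w = ⊥ ↔ p ⊓ w.comap s.mkQ ≤ s := by
  simp only [eq_bot_iff, SetLike.le_def, mem_inf, mem_map, mem_comap, mem_bot]
  constructor
  · rintro h x ⟨hxp, hxw⟩
    exact (Quotient.mk_eq_zero s).mp (h ⟨⟨x, hxp, rfl⟩, hxw⟩)
  · rintro h _ ⟨⟨x, hxp, rfl⟩, hxw⟩
    exact (Quotient.mk_eq_zero s).mpr (h ⟨hxp, hxw⟩)

def geEquivQuotient (s : Submodule K V) (P : Submodule K V → Prop) :
    {w : Submodule K V // s ≤ w ∧ P w} ≃ {w : Submodule K (V ⧸ s) // P (w.comap s.mkQ)} where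
  toFun w := ⟨w.1.map s.mkQ, by rw [comap_map_mkQ, sup_eq_right.mpr w.2.1]; exact w.2.2⟩
  invFun w := ⟨w.1.comap s.mkQ, le_comap_mkQ s w.1, w.2⟩
  left_inv w := Subtype.ext <| by simp only [comap_map_mkQ, sup_eq_right.mpr w.2.1]
  right_inv w := Subtype.ext <| map_comap_eq_of_surjective s.mkQ_surjective w.1

theorem natCard_mem_and_finrank_eq_succ [Module.Finite K V] {x : V} (hx : x ≠ 0) (k : ℕ) :
    Nat.card {w : Submodule K V // x ∈ w ∧ finrank K w = k + 1} =
      Nat.card {w : Submodule K (V ⧸ K ∙ x) // finrank K w = k} := by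
  refine Nat.card_congr <|
    (Equiv.subtypeEquivRight fun w => ?_).trans <|
    (geEquivQuotient (K ∙ x) (finrank K · = k + 1)).trans <|
    Equiv.subtypeEquivRight fun w => ?_
  · rw [span_singleton_le_iff_mem]
  · rw [finrank_comap_mkQ, finrank_span_singleton hx, Nat.add_right_cancel_iff]

theorem natCard_finrank_eq_and_inf_eq_quotient [Module.Finite K V] {p u : Submodule K V}
    (hu : u ≤ p) (c : ℕ) :
    Nat.card {w : Submodule K V // finrank K w = c ∧ p ⊓ w = u} =
      Nat.card {w : Submodule K (V ⧸ u) // finrank K w + finrank K u = c ∧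
        p.map u.mkQ ⊓ w = ⊥} := by
  refine Nat.card_congr <|
    (Equiv.subtypeEquivRight fun w => ?_).trans <|
    (geEquivQuotient u (fun w => finrank K w = c ∧ p ⊓ w ≤ u)).trans <|
    Equiv.subtypeEquivRight fun w => ?_
  · constructor
    · rintro ⟨hc, rfl⟩
      exact ⟨inf_le_right, hc, le_rfl⟩
    · rintro ⟨huw, hc, hle⟩
      exact ⟨hc, le_antisymm hle (le_inf hu huw)⟩
  · rw [finrank_comap_mkQ, map_mkQ_inf_eq_bot_iff]

end Submodule

namespace LinearMap

variable {Q : Type*} [AddCommGroup Q] [Module K Q] {π : V →ₗ[K] Q} {v : Submodule K Q}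

def sectionsEquiv {σ : Q →ₗ[K] V} (hσ : π ∘ₗ σ = id) (v : Submodule K Q) :
    {g : v →ₗ[K] V // π ∘ₗ g = v.subtype} ≃ (v →ₗ[K] ker π) where
  toFun g := (g.1 - σ ∘ₗ v.subtype).codRestrict _ fun x => by
    simp [← comp_apply π g.1, g.2, ← comp_apply π σ, hσ]
  invFun f := ⟨σ ∘ₗ v.subtype + (ker π).subtype ∘ₗ f, by
    ext x; simp [← comp_apply π σ, hσ]⟩
  left_inv g := by ext; simp [codRestrict]
  right_inv f := by ext; simp

theorem ker_inf_range_eq_bot_and_map_range {g : v →ₗ[K] V} (hg : π ∘ₗ g = v.subtype) :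
    ker π ⊓ range g = ⊥ ∧ (range g).map π = v := by
  refine ⟨eq_bot_iff.mpr ?_, by rw [← range_comp, hg, Submodule.range_subtype]⟩
  rintro _ ⟨hx, x, rfl⟩
  have : x = 0 := Subtype.ext <| by
    rw [Submodule.coe_zero, ← mem_ker.mp hx, ← comp_apply, hg, Submodule.subtype_apply]
  simp [this]

theorem eq_of_range_eq {g g' : v →ₗ[K] V} (hg : π ∘ₗ g = v.subtype) (hg' : π ∘ₗ g' = v.subtype)
    (h : range g = range g') : g = g' := by
  ext x
  obtain ⟨y, hy⟩ : g x ∈ range g' := h ▸ mem_range_self g x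
  have hxy : y = x := Subtype.ext <| by
    rw [← Submodule.subtype_apply, ← hg', comp_apply, hy, ← comp_apply, hg,
      Submodule.subtype_apply]
  rw [← hy, hxy]

theorem exists_section_range_eq {s : Submodule K V} (hs : ker π ⊓ s = ⊥) (hsv : s.map π = v) :
    ∃ g : v →ₗ[K] V, π ∘ₗ g = v.subtype ∧ range g = s := by
  let πs : s →ₗ[K] v :=
    (π ∘ₗ s.subtype).codRestrict v fun x => hsv ▸ Submodule.mem_map_of_mem x.2
  have hinj : Function.Injective πs := by
    rw [← ker_eq_bot, eq_bot_iff]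
    intro x hx
    have : (x : V) ∈ ker π ⊓ s := ⟨Subtype.ext_iff.mp (mem_ker.mp hx), x.2⟩
    simpa [hs] using this
  have hsurj : Function.Surjective πs := by
    rintro ⟨_, hy⟩
    obtain ⟨x, hx, rfl⟩ := hsv ▸ hy
    exact ⟨⟨x, hx⟩, rfl⟩
  let e := LinearEquiv.ofBijective πs ⟨hinj, hsurj⟩
  refine ⟨s.subtype ∘ₗ e.symm.toLinearMap, ?_, ?_⟩
  · ext x
    exact Subtype.ext_iff.mp (e.apply_symm_apply x)
  · rw [range_comp_of_range_eq_top _ e.symm.range, Submodule.range_subtype]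

theorem natCard_ker_inf_eq_bot_and_map_eq [Finite K] [Module.Finite K V] [Module.Finite K Q]
    (hπ : Function.Surjective π) (v : Submodule K Q) :
    Nat.card {s : Submodule K V // ker π ⊓ s = ⊥ ∧ s.map π = v} =
      Nat.card K ^ (finrank K v * finrank K (ker π)) := by
  obtain ⟨σ, hσ⟩ := π.exists_rightInverse_of_surjective (range_eq_top.mpr hπ)
  let r : {g : v →ₗ[K] V // π ∘ₗ g = v.subtype} →
      {s : Submodule K V // ker π ⊓ s = ⊥ ∧ s.map π = v} :=
    fun g => ⟨range g.1, ker_inf_range_eq_bot_and_map_range g.2⟩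
  have hr : Function.Bijective r := by
    refine ⟨fun g g' h => Subtype.ext (eq_of_range_eq g.2 g'.2 (congrArg Subtype.val h)), ?_⟩
    rintro ⟨s, hs, hsv⟩
    obtain ⟨g, hg, rfl⟩ := exists_section_range_eq hs hsv
    exact ⟨⟨g, hg⟩, rfl⟩
  rw [← Nat.card_congr (Equiv.ofBijective r hr), Nat.card_congr (sectionsEquiv hσ v),
    natCard_eq_pow_finrank (K := K), finrank_linearMap]

end LinearMap

end Module

section FiniteField

variable {F V : Type*} [Field F] [Finite F] [AddCommGroup V] [Module F V] [Module.Finite F V]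

theorem natCard_submodule_finrank_eq (k : ℕ) :
    (Nat.card {w : Submodule F V // finrank F w = k} : ℝ) =
      gbinom (Nat.card F) (finrank F V) k := by
  induction k generalizing V with
  | zero =>
    have : Unique {w : Submodule F V // finrank F w = 0} :=
      ⟨⟨⊥, finrank_bot F V⟩, fun w => Subtype.ext (Submodule.finrank_eq_zero.mp w.2)⟩
    rw [Nat.card_unique, Nat.cast_one, Nat.cast_zero, gbinom_zero_right]
  | succ k ih =>
    have := Module.finite_of_finite F (M := V)
    set q : ℝ := (Nat.card F : ℝ)
    -- double counting of the pairs `(w, x)` with `x` a nonzero vector of `w`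
    let e : (Σ w : {w : Submodule F V // finrank F w = k + 1}, {x : w.1 // x ≠ 0}) ≃
        Σ x : {x : V // x ≠ 0}, {w : Submodule F V // x.1 ∈ w ∧ finrank F w = k + 1} :=
      { toFun t := ⟨⟨t.2.1, fun h => t.2.2 (Subtype.ext h)⟩, ⟨t.1.1, t.2.1.2, t.1.2⟩⟩
        invFun t := ⟨⟨t.2.1, t.2.2.2⟩, ⟨⟨t.1.1, t.2.2.1⟩, fun h => t.1.2 congr(Subtype.val $h)⟩⟩
        left_inv _ := rfl
        right_inv _ := rfl }
    have hfiber : ∀ x : {x : V // x ≠ 0},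
        (Nat.card {w : Submodule F V // x.1 ∈ w ∧ finrank F w = k + 1} : ℝ) =
          gbinom q (finrank F V - 1) k := fun x => by
      have h := (F ∙ x.1).finrank_quotient_add_finrank
      rw [finrank_span_singleton x.2] at h
      rw [Submodule.natCard_mem_and_finrank_eq_succ x.2, ih]
      congr 1
      omega
    have hcount := Nat.cast_card_sigma_eq_mul hfiber
    rw [natCard_subtype_ne_zero (K := F), ← Nat.card_congr e,
      Nat.cast_card_sigma_eq_mul fun w => by rw [natCard_subtype_ne_zero (K := F), w.2]] at hcount
    have hq : q ^ (k + 1) - 1 ≠ 0 :=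
      (sub_pos.mpr (one_lt_pow₀ (Nat.one_lt_cast.mpr Finite.one_lt_card) k.succ_ne_zero)).ne'
    rw [Nat.cast_succ, gbinom_succ_right, ← mul_div_assoc, eq_div_iff hq, zpow_natCast]
    linear_combination hcount

theorem natCard_finrank_eq_and_inf_eq_bot (P : Submodule F V) (k : ℕ) :
    (Nat.card {w : Submodule F V // finrank F w = k ∧ P ⊓ w = ⊥} : ℝ) =
      gbinom (Nat.card F) (finrank F (V ⧸ P)) k * Nat.card F ^ (k * finrank F P) := by
  let f : {w : Submodule F V // finrank F w = k ∧ P ⊓ w = ⊥} →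
      {v : Submodule F (V ⧸ P) // finrank F v = k} :=
    fun w => ⟨w.1.map P.mkQ, (Submodule.finrank_map_mkQ_of_inf_eq_bot w.2.2).trans w.2.1⟩
  have hfiber : ∀ v, {w // f w = v} ≃
      {s : Submodule F V // LinearMap.ker P.mkQ ⊓ s = ⊥ ∧ s.map P.mkQ = v.1} := fun v =>
    { toFun w := ⟨w.1.1, by rw [Submodule.ker_mkQ]; exact w.1.2.2, congr(Subtype.val $(w.2))⟩
      invFun s :=
        have hs : P ⊓ s.1 = ⊥ := by simpa only [Submodule.ker_mkQ] using s.2.1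
        ⟨⟨s.1, by rw [← Submodule.finrank_map_mkQ_of_inf_eq_bot hs, s.2.2, v.2], hs⟩,
          Subtype.ext s.2.2⟩
      left_inv _ := rfl
      right_inv _ := rfl }
  rw [← Nat.card_congr (Equiv.sigmaFiberEquiv f), Nat.cast_card_sigma_eq_mul fun v => ?_,
    natCard_submodule_finrank_eq]
  rw [Nat.card_congr (hfiber v), LinearMap.natCard_ker_inf_eq_bot_and_map_eq P.mkQ_surjective,
    v.2, Submodule.ker_mkQ, Nat.cast_pow]

theorem natCard_finrank_eq_and_inf_eq {p u : Submodule F V} (hu : u ≤ p) (c : ℕ) :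
    (Nat.card {w : Submodule F V // finrank F w = c ∧ p ⊓ w = u} : ℝ) =
      Nat.card F ^ (((finrank F p : ℤ) - finrank F u) * ((c : ℤ) - finrank F u)) *
        gbinom (Nat.card F) ((finrank F V : ℤ) - finrank F p) ((c : ℤ) - finrank F u) := by
  rw [Submodule.natCard_finrank_eq_and_inf_eq_quotient hu]
  have hp := Submodule.finrank_map_add_finrank_inf_ker u.mkQ p
  rw [Submodule.ker_mkQ, inf_eq_right.mpr hu] at hp
  have hV := (p.map u.mkQ).finrank_quotient_add_finrank
  rw [← Nat.add_right_cancel_iff (n := finrank F u), add_assoc, hp,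
    u.finrank_quotient_add_finrank] at hV
  rcases le_or_gt (finrank F u) c with hc | hc
  · obtain ⟨k, rfl⟩ := Nat.exists_eq_add_of_le hc
    rw [Nat.card_congr (Equiv.subtypeEquivRight
        (q := fun w : Submodule F (V ⧸ u) => finrank F w = k ∧ p.map u.mkQ ⊓ w = ⊥)
        fun w => and_congr_left' (by omega)),
      natCard_finrank_eq_and_inf_eq_bot, mul_comm]
    have hexp : ((finrank F p : ℤ) - finrank F u) * (((finrank F u + k : ℕ) : ℤ) - finrank F u) =
        ((k * finrank F (p.map u.mkQ) : ℕ) : ℤ) := by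
      rw [← hp]; push_cast; ring
    rw [hexp, zpow_natCast,
      show (finrank F V : ℤ) - finrank F p = finrank F ((V ⧸ u) ⧸ p.map u.mkQ) by omega,
      show ((finrank F u + k : ℕ) : ℤ) - finrank F u = k by omega]
  · have : IsEmpty {w : Submodule F (V ⧸ u) // finrank F w + finrank F u = c ∧
        p.map u.mkQ ⊓ w = ⊥} := ⟨fun w => by omega⟩
    rw [Nat.card_of_isEmpty, gbinom_of_neg _ _ (by omega)]
    simp

end FiniteField

theorem stmt4 (F : Type*) [Field F] [Fintype F] (n a c y : ℕ)
    (p : Submodule F (Fin n → F)) (hp : finrank F p = a) :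
    (Nat.card {w : Submodule F (Fin n → F) //
        finrank F w = c ∧ finrank F (p ⊓ w : Submodule F (Fin n → F)) = y} : ℝ) =
      (Fintype.card F : ℝ) ^ (((a : ℤ) - y) * ((c : ℤ) - y)) *
        gbinom (Fintype.card F) a y * gbinom (Fintype.card F) ((n : ℤ) - a) ((c : ℤ) - y) := by
  let f : {w : Submodule F (Fin n → F) //
        finrank F w = c ∧ finrank F (p ⊓ w : Submodule F _) = y} →
      {u : Set.Iic p // finrank F u.1 = y} :=
    fun w => ⟨⟨p ⊓ w.1, Set.mem_Iic.mpr inf_le_left⟩, w.2.2⟩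
  have hfiber : ∀ u, {w // f w = u} ≃
      {w : Submodule F (Fin n → F) // finrank F w = c ∧ p ⊓ w = u.1.1} := fun u =>
    { toFun w := ⟨w.1.1, w.1.2.1, congr(Subtype.val (Subtype.val $(w.2)))⟩
      invFun w := ⟨⟨w.1, w.2.1, by rw [w.2.2]; exact u.2⟩, Subtype.ext (Subtype.ext w.2.2)⟩
      left_inv _ := rfl
      right_inv _ := rfl }
  have hU : Nat.card {u : Set.Iic p // finrank F u.1 = y} =
      Nat.card {u : Submodule F p // finrank F u = y} :=
    Nat.card_congr (p.mapIic.toEquiv.subtypeEquiv fun u => by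
      change _ ↔ finrank F (u.map p.subtype) = y
      rw [Submodule.finrank_map_subtype_eq]).symm
  rw [← Nat.card_eq_fintype_card, ← Nat.card_congr (Equiv.sigmaFiberEquiv f),
    Nat.cast_card_sigma_eq_mul fun u => by
      rw [Nat.card_congr (hfiber u), natCard_finrank_eq_and_inf_eq u.1.2, u.2, hp,
        finrank_fin_fun],
    hU, natCard_submodule_finrank_eq, hp]
  ring
end

section
/- For integers n, p, m, C_q(n−p, m) = ∑_{k=0}^{m} (−1)^k q^{(n−m−p)k + binom(k+1,2)} C_q(p,k) C_q(n−k, m−k). -/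
open Finset

variable {K : Type*} [Field K] {q : K}

def qBinom (q : K) (a : ℤ) (k : ℕ) : K :=
  ∏ i ∈ range k, (q ^ (a - k + i + 1) - 1) / (q ^ ((i : ℤ) + 1) - 1)

theorem gbinom_natCast (q : ℝ) (a : ℤ) (k : ℕ) : gbinom q a k = qBinom q a k := by
  simp [gbinom, qBinom]

@[simp]
theorem qBinom_zero_right (q : K) (a : ℤ) : qBinom q a 0 = 1 := by
  simp [qBinom]

theorem qBinom_zero_succ (q : K) (k : ℕ) : qBinom q 0 (k + 1) = 0 :=
  prod_eq_zero (self_mem_range_succ k) (by push_cast; ring_nf; simp)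

theorem zpow_natCast_add_one_sub_one_ne_zero (hq : ¬IsOfFinOrder q) (i : ℕ) :
    q ^ ((i : ℤ) + 1) - 1 ≠ 0 := by
  rw [sub_ne_zero, ← Nat.cast_succ, zpow_natCast]
  exact fun h ↦ hq (isOfFinOrder_iff_pow_eq_one.2 ⟨i + 1, i.succ_pos, h⟩)

theorem mul_qBinom_succ_eq_mul_qBinom_sub_one (hq : ¬IsOfFinOrder q) (a : ℤ) (k : ℕ) :
    (q ^ ((k : ℤ) + 1) - 1) * qBinom q a (k + 1) = (q ^ a - 1) * qBinom q (a - 1) k := by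
  have hshift (i : ℕ) : a - ↑(k + 1) + i + 1 = a - 1 - k + i + 1 := by push_cast; ring
  rw [qBinom, prod_range_succ, show a - ↑(k + 1) + k + 1 = a by push_cast; ring, mul_left_comm,
    mul_div_cancel₀ _ (zpow_natCast_add_one_sub_one_ne_zero hq k), mul_comm, qBinom]
  simp only [hshift]

theorem mul_qBinom_succ_eq_mul_qBinom (hq : ¬IsOfFinOrder q) (a : ℤ) (k : ℕ) :
    (q ^ ((k : ℤ) + 1) - 1) * qBinom q a (k + 1) = (q ^ (a - k) - 1) * qBinom q a k := by
  have hden := prod_ne_zero_iff.2 fun i (_ : i ∈ range k) ↦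
    zpow_natCast_add_one_sub_one_ne_zero hq i
  have hshift (i : ℕ) : a - ↑(k + 1) + ↑(i + 1) + 1 = a - k + i + 1 := by push_cast; ring
  simp only [qBinom, prod_div_distrib]
  rw [prod_range_succ' (fun i : ℕ ↦ q ^ (a - ↑(k + 1) + i + 1) - 1), prod_range_succ,
    show a - ↑(k + 1) + ↑(0 : ℕ) + 1 = a - k by push_cast; ring]
  simp only [hshift]
  field_simp [zpow_natCast_add_one_sub_one_ne_zero hq k]

theorem qBinom_succ_eq_zpow_mul_add (hq0 : q ≠ 0) (hq : ¬IsOfFinOrder q) (a : ℤ) (k : ℕ) :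
    qBinom q a (k + 1) =
      q ^ (a - (k + 1)) * qBinom q (a - 1) k + qBinom q (a - 1) (k + 1) := by
  refine mul_left_cancel₀ (zpow_natCast_add_one_sub_one_ne_zero hq k) ?_
  rw [mul_qBinom_succ_eq_mul_qBinom_sub_one hq, mul_add, mul_qBinom_succ_eq_mul_qBinom hq,
    show a - 1 - k = a - (k + 1) by ring, ← sub_add_cancel a ((k : ℤ) + 1), zpow_add₀ hq0,
    add_sub_cancel_right]
  ring

theorem qBinom_succ_eq_add_zpow_mul (hq0 : q ≠ 0) (hq : ¬IsOfFinOrder q) (a : ℤ) (k : ℕ) :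
    qBinom q a (k + 1) =
      qBinom q (a - 1) k + q ^ ((k : ℤ) + 1) * qBinom q (a - 1) (k + 1) := by
  refine mul_left_cancel₀ (zpow_natCast_add_one_sub_one_ne_zero hq k) ?_
  rw [mul_qBinom_succ_eq_mul_qBinom_sub_one hq, mul_add, mul_left_comm,
    mul_qBinom_succ_eq_mul_qBinom hq, show a - 1 - k = a - (k + 1) by ring,
    ← sub_add_cancel a ((k : ℤ) + 1), zpow_add₀ hq0, add_sub_cancel_right]
  ring

def qAltTerm (q : K) (m : ℕ) (n p : ℤ) (k : ℕ) : K :=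
  (-1) ^ k * q ^ ((n - m - p) * k + ((k + 1).choose 2 : ℤ)) *
    qBinom q p k * qBinom q (n - k) (m - k)

theorem qAltTerm_zero (q : K) (m : ℕ) (n p : ℤ) : qAltTerm q m n p 0 = qBinom q n m := by
  simp [qAltTerm]

theorem qAltTerm_succ (hq0 : q ≠ 0) (hq : ¬IsOfFinOrder q) (m : ℕ) (n p : ℤ) (k : ℕ) :
    qAltTerm q (m + 1) n p (k + 1) =
      qAltTerm q (m + 1) n (p - 1) (k + 1) -
        q ^ (n - m - p) * qAltTerm q m (n - 1) (p - 1) k := by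
  have hchoose : (((k + 1 + 1).choose 2 : ℕ) : ℤ) = ((k + 1).choose 2 : ℕ) + (k + 1) := by
    rw [Nat.choose_succ_succ (k + 1) 1, Nat.choose_one_right]
    push_cast; ring
  have hexp₁ :
      q ^ ((n - ↑(m + 1) - p) * ↑(k + 1) + ((k + 1 + 1).choose 2 : ℤ)) * q ^ ((k : ℤ) + 1) =
        q ^ ((n - ↑(m + 1) - (p - 1)) * ↑(k + 1) + ((k + 1 + 1).choose 2 : ℤ)) := by
    rw [← zpow_add₀ hq0]; congr 1; push_cast; ring
  have hexp₂ : q ^ ((n - ↑(m + 1) - p) * ↑(k + 1) + ((k + 1 + 1).choose 2 : ℤ)) =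
      q ^ (n - m - p) * q ^ ((n - 1 - m - (p - 1)) * k + ((k + 1).choose 2 : ℤ)) := by
    rw [← zpow_add₀ hq0]; congr 1; rw [hchoose]; push_cast; ring
  have hn : n - ↑(k + 1) = n - 1 - k := by push_cast; ring
  simp only [qAltTerm, hn, Nat.add_sub_add_right, qBinom_succ_eq_add_zpow_mul hq0 hq p k]
  linear_combination
    ((-1) ^ (k + 1) * qBinom q (p - 1) (k + 1) * qBinom q (n - 1 - k) (m - k)) * hexp₁ +
      ((-1) ^ (k + 1) * qBinom q (p - 1) k * qBinom q (n - 1 - k) (m - k)) * hexp₂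

theorem sum_qAltTerm_succ (hq0 : q ≠ 0) (hq : ¬IsOfFinOrder q) (m : ℕ) (n p : ℤ) :
    ∑ k ∈ range (m + 2), qAltTerm q (m + 1) n p k =
      ∑ k ∈ range (m + 2), qAltTerm q (m + 1) n (p - 1) k -
        q ^ (n - m - p) * ∑ k ∈ range (m + 1), qAltTerm q m (n - 1) (p - 1) k := by
  rw [sum_range_succ', sum_range_succ' _ (m + 1),
    sum_congr rfl fun k _ ↦ qAltTerm_succ hq0 hq m n p k, sum_sub_distrib, mul_sum,
    qAltTerm_zero, qAltTerm_zero]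
  ring

theorem sum_qAltTerm_zero_right (q : K) (m : ℕ) (n : ℤ) :
    ∑ k ∈ range (m + 1), qAltTerm q m n 0 k = qBinom q n m := by
  rw [sum_range_succ', sum_eq_zero fun k _ ↦ by simp [qAltTerm, qBinom_zero_succ], zero_add,
    qAltTerm_zero]

theorem qBinom_sub_eq_sum_qAltTerm (hq0 : q ≠ 0) (hq : ¬IsOfFinOrder q) (m : ℕ) (n p : ℤ) :
    qBinom q (n - p) m = ∑ k ∈ range (m + 1), qAltTerm q m n p k := by
  induction m generalizing n p with
  | zero => simp [qAltTerm_zero]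
  | succ m ih =>
    have step (r : ℤ) :
        qBinom q (n - r) (m + 1) - ∑ k ∈ range (m + 2), qAltTerm q (m + 1) n r k =
          qBinom q (n - (r - 1)) (m + 1) -
            ∑ k ∈ range (m + 2), qAltTerm q (m + 1) n (r - 1) k := by
      have pascal := qBinom_succ_eq_zpow_mul_add hq0 hq (n - (r - 1)) m
      rw [show n - (r - 1) - 1 = n - r by ring, show n - (r - 1) - (m + 1) = n - m - r by ring]
        at pascal
      have ihr := ih (n - 1) (r - 1)
      rw [show n - 1 - (r - 1) = n - r by ring] at ihr
      rw [sum_qAltTerm_succ hq0 hq, pascal, ihr]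
      ring
    induction p using Int.induction_on with
    | zero => rw [sub_zero, sum_qAltTerm_zero_right]
    | succ i hi => rwa [← sub_eq_zero, step, add_sub_cancel_right, sub_eq_zero]
    | pred i hi => rwa [← sub_eq_zero, ← step, sub_eq_zero]

theorem stmt10 (q : ℝ) (hq : 1 < q) (n p : ℤ) (m : ℕ) :
    gbinom q (n - p) m =
      ∑ k ∈ Finset.range (m + 1),
        (-1 : ℝ) ^ k * q ^ ((n - m - p) * k + ((k + 1).choose 2 : ℤ)) *
          gbinom q p k * gbinom q (n - k) ((m : ℤ) - k) := by
  have hq0 : q ≠ 0 := by positivity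
  have hq' : ¬IsOfFinOrder q :=
    orderOf_eq_zero_iff.mp (orderOf_abs_ne_one (by rw [abs_of_pos (by positivity)]; exact hq.ne'))
  rw [gbinom_natCast, qBinom_sub_eq_sum_qAltTerm hq0 hq' m n p]
  refine sum_congr rfl fun k hk ↦ ?_
  rw [qAltTerm, gbinom_natCast, ← Nat.cast_sub (Nat.lt_succ_iff.mp (mem_range.mp hk)),
    gbinom_natCast]
end
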